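/- arXiv:1211.5023 — 2 statements merged into one kernel-verified Lean document; each statement's English description precedes it below -/
import Mathlib

section
/- Let β = (1+√5)/2. For Lebesgue-almost every x ∈ [0, 1/(β−1)], the frequency of the digit 1 in the greedy β-expansion of x, i.e. lim_{n→∞} (1/n)·#{k ≤ n : x_k = 1}, exists and equals 1/(β²+1), where (x_k) is the digit sequence generated by iterating the greedy β-transformation T. -/
/-!
Lebesgue measure on `[0, 1)` is not `T`-invariant, but `T` acts on the pair
`(∫_{[0,1)} f, ∫_{[0,φ⁻¹)} f)` through the matrix `φ⁻¹ [[1, 1], [1, 0]]`, whose eigenvalues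
are `1` and `-φ⁻²`. Iterating it gives the integrals of the digits `d_k` and of the products
`d_j d_k` in closed form, and the covariances `∫_{[0,1)} (d_j - p) (d_k - p)`,
`p = 1 / (φ² + 1)`, decay like `2^{-|j-k|}`. So the second moment of `S_N / N - p`, where `S_N`
is the digit sum of length `N`, is `O(1 / N)`; along the squares `N = M²` these moments are
summable, which gives convergence almost everywhere, and the monotonicity of `S_N` fills the
gaps. Since preimages of null sets under `T` are null, the frequency at `x` equals the one at
`T x`, and every orbit in `[0, φ)` enters `[0, 1)`, this extends to `[0, φ]`.
-/

open MeasureTheory Filter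

/-- The golden mean. -/
noncomputable def goldenMean : ℝ := (1 + Real.sqrt 5) / 2

/-- The greedy β-transformation for the golden mean. -/
noncomputable def greedyT (x : ℝ) : ℝ :=
  if x < 1 / goldenMean then goldenMean * x else goldenMean * x - 1

/-- The k-th digit (k ≥ 0) of the greedy β-expansion of x: it is 1 iff T^k x ≥ 1/β. -/
noncomputable def greedyDigit (x : ℝ) (k : ℕ) : ℝ :=
  if 1 / goldenMean ≤ greedyT^[k] x then 1 else 0

open Topology
open scoped goldenRatio

section SecondMoment

open Finset

variable {α : Type*} [MeasurableSpace α] {μ : Measure α}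

theorem tendsto_div_of_monotone_of_tendsto_div_sq {u : ℕ → ℝ} {l : ℝ} (hu : Monotone u)
    (h : Tendsto (fun n : ℕ => u (n ^ 2) / (n ^ 2 : ℕ)) atTop (𝓝 l)) :
    Tendsto (fun n : ℕ => u n / n) atTop (𝓝 l) := by
  refine tendsto_div_of_monotone_of_exists_subseq_tendsto_div u l hu fun a ha =>
    ⟨fun n => n ^ 2, ?_, tendsto_pow_atTop two_ne_zero, h⟩
  have hratio : Tendsto (fun n : ℕ => (1 + 1 / (n : ℝ)) ^ 2) atTop (𝓝 1) := by
    simpa using ((tendsto_const_nhds (x := (1 : ℝ))).add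
      tendsto_one_div_atTop_nhds_zero_nat).pow 2
  filter_upwards [(tendsto_order.1 hratio).2 a ha, eventually_gt_atTop 0] with n hn hn0
  have hn0' : (0 : ℝ) < n := by exact_mod_cast hn0
  have hsq : ((n : ℝ) + 1) ^ 2 = (1 + 1 / (n : ℝ)) ^ 2 * (n : ℝ) ^ 2 := by field_simp
  push_cast
  rw [hsq]
  gcongr

theorem sq_sum_range_sub_mul_eq (a : ℕ → ℝ) (p : ℝ) (N : ℕ) :
    (∑ k ∈ range N, a k - N * p) ^ 2 = ∑ j ∈ range N, ∑ k ∈ range N, (a j - p) * (a k - p) := by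
  rw [sq, ← sum_mul_sum, sum_sub_distrib, sum_const, card_range, nsmul_eq_mul]

theorem sum_range_pow_dist_le {r : ℝ} (hr0 : 0 ≤ r) (hr1 : r < 1) (j N : ℕ) :
    ∑ k ∈ range N, r ^ Nat.dist j k ≤ 2 / (1 - r) := by
  have hgeom : ∀ n, ∑ i ∈ range n, r ^ i ≤ 1 / (1 - r) := fun n => by
    simpa using geom_sum_Ico_le_of_lt_one (m := 0) (n := n) hr0 hr1
  rw [← sum_filter_add_sum_filter_not _ (· ≤ j),
    show 2 / (1 - r) = 1 / (1 - r) + 1 / (1 - r) by ring]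
  gcongr
  · calc ∑ k ∈ range N with k ≤ j, r ^ Nat.dist j k
        ≤ ∑ k ∈ range (j + 1), r ^ (j + 1 - 1 - k) := by
          refine sum_le_sum_of_subset_of_nonneg (fun k hk => ?_) (fun _ _ _ => by positivity)
            |>.trans_eq' (sum_congr rfl fun k hk => ?_)
          · simp only [mem_filter, mem_range] at hk ⊢; omega
          · rw [Nat.dist_comm, Nat.dist_eq_sub_of_le (mem_filter.1 hk).2]; rfl
      _ ≤ 1 / (1 - r) := by rw [sum_range_reflect]; exact hgeom _
  · calc ∑ k ∈ range N with ¬k ≤ j, r ^ Nat.dist j k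
        ≤ ∑ k ∈ Ico j N, r ^ (k - j) := by
          refine sum_le_sum_of_subset_of_nonneg (fun k hk => ?_) (fun _ _ _ => by positivity)
            |>.trans_eq' (sum_congr rfl fun k hk => ?_)
          · simp only [mem_filter, mem_range, mem_Ico] at hk ⊢; omega
          · rw [Nat.dist_eq_sub_of_le (by simp at hk; omega)]
      _ ≤ 1 / (1 - r) := by
          rw [sum_Ico_eq_sum_range]; simpa using hgeom (N - j)

theorem integral_sub_mul_sub [IsProbabilityMeasure μ] {f g : α → ℝ} (hf : Integrable f μ)
    (hg : Integrable g μ) (hfg : Integrable (fun x => f x * g x) μ) (a b : ℝ) :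
    ∫ x, (f x - a) * (g x - b) ∂μ
      = ∫ x, f x * g x ∂μ - b * ∫ x, f x ∂μ - a * ∫ x, g x ∂μ + a * b := by
  have hexpand : ∀ x, (f x - a) * (g x - b) = f x * g x - b * f x - a * g x + a * b :=
    fun x => by ring
  have hfg_f : Integrable (fun x => f x * g x - b * f x) μ := hfg.sub (hf.const_mul b)
  have hfg_f_g : Integrable (fun x => f x * g x - b * f x - a * g x) μ :=
    hfg_f.sub (hg.const_mul a)
  simp_rw [hexpand]
  rw [integral_add hfg_f_g (integrable_const _), integral_sub hfg_f (hg.const_mul a),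
    integral_sub hfg (hf.const_mul b), integral_const_mul, integral_const_mul, integral_const,
    probReal_univ, one_smul]

theorem integral_sq_sum_sub_le {X : ℕ → α → ℝ} {p C r : ℝ} (hr0 : 0 ≤ r) (hr1 : r < 1)
    (hint : ∀ j k, Integrable (fun x => (X j x - p) * (X k x - p)) μ)
    (hcov : ∀ j k, |∫ x, (X j x - p) * (X k x - p) ∂μ| ≤ C * r ^ Nat.dist j k) (N : ℕ) :
    ∫ x, (∑ k ∈ range N, X k x - N * p) ^ 2 ∂μ ≤ 2 * C / (1 - r) * N := by
  have hC : 0 ≤ C := by simpa using (abs_nonneg _).trans (hcov 0 0)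
  simp_rw [sq_sum_range_sub_mul_eq]
  rw [integral_finsetSum _ fun j _ => integrable_finsetSum _ fun k _ => hint j k]
  calc ∑ j ∈ range N, ∫ x, ∑ k ∈ range N, (X j x - p) * (X k x - p) ∂μ
      = ∑ j ∈ range N, ∑ k ∈ range N, ∫ x, (X j x - p) * (X k x - p) ∂μ :=
        sum_congr rfl fun j _ => integral_finsetSum _ fun k _ => hint j k
    _ ≤ ∑ j ∈ range N, ∑ k ∈ range N, C * r ^ Nat.dist j k :=
        sum_le_sum fun j _ => sum_le_sum fun k _ => (le_abs_self _).trans (hcov j k)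
    _ ≤ ∑ j ∈ range N, 2 * C / (1 - r) := sum_le_sum fun j _ => by
        rw [← mul_sum, mul_comm 2 C, mul_div_assoc]
        exact mul_le_mul_of_nonneg_left (sum_range_pow_dist_le hr0 hr1 j N) hC
    _ = 2 * C / (1 - r) * N := by rw [sum_const, card_range, nsmul_eq_mul, mul_comm]

theorem ae_tendsto_zero_of_summable_integral {F : ℕ → α → ℝ} (hF : ∀ n x, 0 ≤ F n x)
    (hint : ∀ n, Integrable (F n) μ) (hsum : Summable fun n => ∫ x, F n x ∂μ) :
    ∀ᵐ x ∂μ, Tendsto (fun n => F n x) atTop (𝓝 0) := by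
  have hlint : ∀ n, ∫⁻ x, ENNReal.ofReal (F n x) ∂μ = ENNReal.ofReal (∫ x, F n x ∂μ) :=
    fun n => (ofReal_integral_eq_lintegral_ofReal (hint n) (Eventually.of_forall (hF n))).symm
  have hfin : ∫⁻ x, ∑' n, ENNReal.ofReal (F n x) ∂μ ≠ ⊤ := by
    rw [lintegral_tsum fun n => (hint n).aemeasurable.ennreal_ofReal]
    simp only [hlint]
    rw [← ENNReal.ofReal_tsum_of_nonneg (fun n => integral_nonneg (hF n)) hsum]
    exact ENNReal.ofReal_ne_top
  filter_upwards [ae_lt_top' (AEMeasurable.tsum fun n =>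
    (hint n).aemeasurable.ennreal_ofReal) hfin] with x hx
  have h := (ENNReal.tendsto_toReal ENNReal.zero_ne_top).comp
    (ENNReal.tendsto_atTop_zero_of_tsum_ne_top hx.ne)
  simpa [Function.comp_def, ENNReal.toReal_ofReal (hF _ x)] using h

theorem ae_tendsto_sum_div_of_integral_sq_le {X : ℕ → α → ℝ} {p K : ℝ}
    (hX : ∀ k x, 0 ≤ X k x)
    (hint : ∀ N, Integrable (fun x => (∑ k ∈ range N, X k x - N * p) ^ 2) μ)
    (hvar : ∀ N, ∫ x, (∑ k ∈ range N, X k x - N * p) ^ 2 ∂μ ≤ K * N) :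
    ∀ᵐ x ∂μ, Tendsto (fun N : ℕ => (∑ k ∈ range N, X k x) / N) atTop (𝓝 p) := by
  set F : ℕ → α → ℝ := fun n x =>
    (∑ k ∈ range (n ^ 2), X k x - (n ^ 2 : ℕ) * p) ^ 2 / (n : ℝ) ^ 4
  have hF : ∀ n x, 0 ≤ F n x := fun n x => by positivity
  have hFint : ∀ n, Integrable (F n) μ := fun n => (hint (n ^ 2)).div_const _
  have hFle : ∀ n, ∫ x, F n x ∂μ ≤ K / (n : ℝ) ^ 2 := by
    intro n
    rcases eq_or_ne n 0 with rfl | hn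
    · simp [F]
    rw [integral_div, div_le_div_iff₀ (by positivity) (by positivity)]
    calc (∫ x, (∑ k ∈ range (n ^ 2), X k x - (n ^ 2 : ℕ) * p) ^ 2 ∂μ) * (n : ℝ) ^ 2
        ≤ K * (n ^ 2 : ℕ) * (n : ℝ) ^ 2 := by gcongr; exact hvar _
      _ = K * (n : ℝ) ^ 4 := by push_cast; ring
  have hsum : Summable fun n => ∫ x, F n x ∂μ := by
    refine Summable.of_nonneg_of_le (fun n => integral_nonneg (hF n)) hFle ?_
    simpa [div_eq_mul_inv] using (Real.summable_nat_pow_inv.mpr one_lt_two).mul_left K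
  filter_upwards [ae_tendsto_zero_of_summable_integral hF hFint hsum] with x hx
  refine tendsto_div_of_monotone_of_tendsto_div_sq
    (monotone_nat_of_le_succ fun n => ?_) ?_
  · simpa [sum_range_succ] using hX n x
  have hsq : Tendsto (fun n : ℕ => ((∑ k ∈ range (n ^ 2), X k x) / (n ^ 2 : ℕ) - p) ^ 2)
      atTop (𝓝 0) := by
    refine hx.congr' ((eventually_ne_atTop 0).mono fun n hn => ?_)
    have hn' : (n : ℝ) ≠ 0 := by exact_mod_cast hn
    simp only [F]
    push_cast
    field_simp
  rw [← tendsto_sub_nhds_zero_iff, tendsto_zero_iff_abs_tendsto_zero]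
  simpa [Function.comp_def, Real.sqrt_sq_eq_abs] using (Real.continuous_sqrt.tendsto 0).comp hsq

theorem ae_tendsto_sum_div_of_abs_integral_sub_mul_sub_le [IsFiniteMeasure μ]
    {X : ℕ → α → ℝ} {p C r : ℝ} (hX : ∀ k, Measurable (X k)) (hX0 : ∀ k x, 0 ≤ X k x)
    (hX1 : ∀ k x, X k x ≤ 1) (hr0 : 0 ≤ r) (hr1 : r < 1)
    (hcov : ∀ j k, |∫ x, (X j x - p) * (X k x - p) ∂μ| ≤ C * r ^ Nat.dist j k) :
    ∀ᵐ x ∂μ, Tendsto (fun N : ℕ => (∑ k ∈ range N, X k x) / N) atTop (𝓝 p) := by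
  have hcentered : ∀ k x, ‖X k x - p‖ ≤ 1 + |p| := fun k x =>
    (norm_sub_le _ _).trans
      (add_le_add (by simpa [abs_of_nonneg (hX0 k x)] using hX1 k x) le_rfl)
  have hint : ∀ j k, Integrable (fun x => (X j x - p) * (X k x - p)) μ := fun j k =>
    .of_bound (by fun_prop) ((1 + |p|) * (1 + |p|)) (ae_of_all _ fun x => by
      rw [norm_mul]
      exact mul_le_mul (hcentered j x) (hcentered k x) (norm_nonneg _) (by positivity))
  refine ae_tendsto_sum_div_of_integral_sq_le hX0 (fun N => ?_)
    (integral_sq_sum_sub_le hr0 hr1 hint hcov)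
  simp_rw [sq_sum_range_sub_mul_eq]
  exact integrable_finsetSum _ fun j _ => integrable_finsetSum _ fun k _ => hint j k

end SecondMoment

theorem MeasureTheory.Measure.QuasiMeasurePreserving.ae_imp_of_forall_exists_iterate_mem
    {α : Type*} [MeasurableSpace α] {μ : Measure α} {T : α → α}
    (hT : Measure.QuasiMeasurePreserving T μ μ) {P : α → Prop} (hP : ∀ x, P (T x) → P x)
    {E S : Set α} (hE : ∀ᵐ x ∂μ, x ∈ E → P x) (hS : ∀ x ∈ S, ∃ n, T^[n] x ∈ E) :
    ∀ᵐ x ∂μ, x ∈ S → P x := by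
  have hback : ∀ n x, P (T^[n] x) → P x := fun n => by
    induction n with
    | zero => exact fun x h => h
    | succ n ih => exact fun x h => hP x (ih (T x) h)
  filter_upwards [ae_all_iff.2 fun n => (hT.iterate n).ae hE] with x hx hxS
  obtain ⟨n, hn⟩ := hS x hxS
  exact hback n x (hx n hn)

theorem tendsto_birkhoffAverage_of_tendsto_birkhoffAverage_apply {α 𝕜 E : Type*} [RCLike 𝕜]
    [NormedAddCommGroup E] [NormedSpace 𝕜 E] {f : α → α} {g : α → E}
    (hg : Bornology.IsBounded (Set.range g)) {x : α} {l : E}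
    (h : Tendsto (birkhoffAverage 𝕜 f g · (f x)) atTop (𝓝 l)) :
    Tendsto (birkhoffAverage 𝕜 f g · x) atTop (𝓝 l) := by
  simpa using h.sub (tendsto_birkhoffAverage_apply_sub_birkhoffAverage' 𝕜 hg f x)

section GoldenMean

open Set Real

theorem goldenMean_eq : goldenMean = φ := rfl

theorem inv_goldenRatio_eq : φ⁻¹ = φ - 1 := by
  rw [inv_goldenRatio, ← one_sub_goldenConj]; ring

theorem inv_goldenRatio_lt_one : φ⁻¹ < 1 := inv_lt_one_of_one_lt₀ one_lt_goldenRatio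

theorem goldenRatio_ge_three_halves : 3 / 2 ≤ φ := by
  nlinarith [goldenRatio_sq, one_lt_goldenRatio]

theorem inv_goldenRatio_add_sq : φ⁻¹ + φ⁻¹ ^ 2 = 1 := by
  rw [inv_goldenRatio_eq]; linear_combination goldenRatio_sq

theorem greedyT_of_lt {x : ℝ} (hx : x < φ⁻¹) : greedyT x = φ * x := by
  rw [greedyT, if_pos (by rwa [goldenMean_eq, one_div])]; rfl

theorem greedyT_of_le {x : ℝ} (hx : φ⁻¹ ≤ x) : greedyT x = φ * x - 1 := by
  rw [greedyT, if_neg (by rwa [goldenMean_eq, one_div, not_lt])]; rfl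

theorem measurable_greedyT : Measurable greedyT :=
  Measurable.ite (measurableSet_lt measurable_id measurable_const) (by fun_prop) (by fun_prop)

theorem quasiMeasurePreserving_greedyT :
    Measure.QuasiMeasurePreserving greedyT volume volume := by
  refine ⟨measurable_greedyT, Measure.AbsolutelyContinuous.mk fun s hs hs0 => ?_⟩
  rw [Measure.map_apply measurable_greedyT hs]
  have hsub : greedyT ⁻¹' s ⊆ (φ * ·) ⁻¹' s ∪ (φ * ·) ⁻¹' ((· + (-1)) ⁻¹' s) := by
    intro x hx
    rcases lt_or_ge x φ⁻¹ with h | h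
    · left; simpa [greedyT_of_lt h] using hx
    · right; simpa [greedyT_of_le h, sub_eq_add_neg] using hx
  refine measure_mono_null hsub (measure_union_null ?_ ?_) <;>
    simp [Real.volume_preimage_mul_left goldenRatio_ne_zero, measure_preimage_add_right, hs0]

theorem mapsTo_greedyT : MapsTo greedyT (Ico 0 φ) (Ico 0 φ) := by
  rintro x ⟨hx0, hxφ⟩
  rcases lt_or_ge x φ⁻¹ with h | h
  · rw [greedyT_of_lt h]
    have : φ * x < 1 := by
      simpa only [mul_inv_cancel₀ goldenRatio_ne_zero] using
        mul_lt_mul_of_pos_left h goldenRatio_pos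
    exact ⟨by positivity, this.trans one_lt_goldenRatio⟩
  · rw [greedyT_of_le h]
    have : 1 ≤ φ * x := by
      simpa only [mul_inv_cancel₀ goldenRatio_ne_zero] using
        mul_le_mul_of_nonneg_left h goldenRatio_pos.le
    constructor
    · linarith
    · nlinarith [goldenRatio_sq]

theorem exists_iterate_greedyT_mem_Ico {x : ℝ} (hx : x ∈ Ico 0 φ) :
    ∃ n, greedyT^[n] x ∈ Ico (0 : ℝ) 1 := by
  by_contra! hout
  have hge : ∀ n, 1 ≤ greedyT^[n] x := fun n => by
    by_contra! h
    exact hout n ⟨(mapsTo_greedyT.iterate n hx).1, h⟩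
  -- on `[1, φ)` the map is `y ↦ φ y - 1`, which expands the distance to the fixed point `φ`
  have hdist : ∀ n, φ - greedyT^[n] x = φ ^ n * (φ - x) := by
    intro n
    induction n with
    | zero => simp
    | succ n ih =>
      rw [Function.iterate_succ_apply',
        greedyT_of_le (inv_goldenRatio_lt_one.le.trans (hge n)), pow_succ]
      linear_combination φ * ih - goldenRatio_sq
  obtain ⟨n, hn⟩ := pow_unbounded_of_one_lt (φ / (φ - x)) one_lt_goldenRatio
  rw [div_lt_iff₀ (sub_pos.2 hx.2)] at hn
  linarith [hdist n, (mapsTo_greedyT.iterate n hx).1]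

theorem greedyDigit_zero (x : ℝ) : greedyDigit x 0 = if φ⁻¹ ≤ x then 1 else 0 := by
  rw [greedyDigit, goldenMean_eq, one_div]; rfl

theorem greedyDigit_zero_of_lt {x : ℝ} (hx : x < φ⁻¹) : greedyDigit x 0 = 0 := by
  rw [greedyDigit_zero, if_neg hx.not_ge]

theorem greedyDigit_zero_of_le {x : ℝ} (hx : φ⁻¹ ≤ x) : greedyDigit x 0 = 1 := by
  rw [greedyDigit_zero, if_pos hx]

theorem greedyDigit_succ (x : ℝ) (k : ℕ) :
    greedyDigit x (k + 1) = greedyDigit (greedyT x) k := by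
  rw [greedyDigit, greedyDigit, Function.iterate_succ_apply]

theorem measurable_greedyDigit (k : ℕ) : Measurable fun x => greedyDigit x k :=
  Measurable.ite (measurableSet_le measurable_const (measurable_greedyT.iterate k))
    measurable_const measurable_const

theorem greedyDigit_nonneg (x : ℝ) (k : ℕ) : 0 ≤ greedyDigit x k := by
  unfold greedyDigit; split_ifs <;> norm_num

theorem greedyDigit_le_one (x : ℝ) (k : ℕ) : greedyDigit x k ≤ 1 := by
  unfold greedyDigit; split_ifs <;> norm_num

theorem greedyDigit_mul_self (x : ℝ) (k : ℕ) :
    greedyDigit x k * greedyDigit x k = greedyDigit x k := by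
  unfold greedyDigit; split_ifs <;> norm_num

theorem integrable_greedyDigit {μ : Measure ℝ} [IsFiniteMeasure μ] (k : ℕ) :
    Integrable (fun x => greedyDigit x k) μ :=
  .of_bound (measurable_greedyDigit k).aestronglyMeasurable 1 (ae_of_all _ fun x => by
    rw [Real.norm_of_nonneg (greedyDigit_nonneg x k)]; exact greedyDigit_le_one x k)

theorem integrable_greedyDigit_mul {μ : Measure ℝ} [IsFiniteMeasure μ] (j k : ℕ) :
    Integrable (fun x => greedyDigit x j * greedyDigit x k) μ :=
  (integrable_greedyDigit k).bdd_mul (measurable_greedyDigit j).aestronglyMeasurable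
    (ae_of_all _ fun x => by
      rw [Real.norm_of_nonneg (greedyDigit_nonneg x j)]; exact greedyDigit_le_one x j)

theorem isBounded_range_greedyDigit_zero : Bornology.IsBounded (range (greedyDigit · 0)) :=
  (Metric.isBounded_Icc (0 : ℝ) 1).subset <| range_subset_iff.2 fun x =>
    ⟨greedyDigit_nonneg x 0, greedyDigit_le_one x 0⟩

theorem sum_greedyDigit_div_eq_birkhoffAverage (x : ℝ) (N : ℕ) :
    (∑ k ∈ Finset.range N, greedyDigit x k) / N
      = birkhoffAverage ℝ greedyT (greedyDigit · 0) N x := by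
  rw [birkhoffAverage, birkhoffSum, smul_eq_mul, div_eq_inv_mul]; rfl

theorem setIntegral_Ico_eq_intervalIntegral (f : ℝ → ℝ) {a b : ℝ} (hab : a ≤ b) :
    ∫ x in Ico a b, f x = ∫ x in a..b, f x := by
  rw [intervalIntegral.integral_of_le hab, integral_Ico_eq_integral_Ioc]

theorem setIntegral_Ico_zero_one_eq_add {f : ℝ → ℝ} (hf : IntegrableOn f (Ico 0 1)) :
    ∫ x in Ico 0 1, f x = (∫ x in Ico 0 φ⁻¹, f x) + ∫ x in Ico φ⁻¹ 1, f x := by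
  rw [← setIntegral_union (Ico_disjoint_Ico_same) measurableSet_Ico
    (hf.mono_set (Ico_subset_Ico_right inv_goldenRatio_lt_one.le))
    (hf.mono_set (Ico_subset_Ico_left (inv_pos.2 goldenRatio_pos).le)),
    Ico_union_Ico_eq_Ico (inv_pos.2 goldenRatio_pos).le inv_goldenRatio_lt_one.le]

theorem setIntegral_Ico_zero_inv_comp_greedyT (f : ℝ → ℝ) :
    ∫ x in Ico 0 φ⁻¹, f (greedyT x) = φ⁻¹ * ∫ y in Ico 0 1, f y := by
  rw [setIntegral_congr_fun measurableSet_Ico fun x hx => congrArg f (greedyT_of_lt hx.2),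
    setIntegral_Ico_eq_intervalIntegral _ (inv_pos.2 goldenRatio_pos).le,
    intervalIntegral.integral_comp_mul_left f goldenRatio_ne_zero, mul_zero,
    mul_inv_cancel₀ goldenRatio_ne_zero, ← setIntegral_Ico_eq_intervalIntegral _ zero_le_one,
    smul_eq_mul]

theorem setIntegral_Ico_inv_one_comp_greedyT (f : ℝ → ℝ) :
    ∫ x in Ico φ⁻¹ 1, f (greedyT x) = φ⁻¹ * ∫ y in Ico 0 φ⁻¹, f y := by
  rw [setIntegral_congr_fun measurableSet_Ico fun x hx => congrArg f (greedyT_of_le hx.1),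
    setIntegral_Ico_eq_intervalIntegral _ inv_goldenRatio_lt_one.le,
    intervalIntegral.integral_comp_mul_sub f goldenRatio_ne_zero,
    mul_inv_cancel₀ goldenRatio_ne_zero, sub_self, mul_one, ← inv_goldenRatio_eq,
    ← setIntegral_Ico_eq_intervalIntegral _ (inv_pos.2 goldenRatio_pos).le, smul_eq_mul]

theorem setIntegral_Ico_zero_one_comp_greedyT {f : ℝ → ℝ}
    (hf : IntegrableOn (fun x => f (greedyT x)) (Ico 0 1)) :
    ∫ x in Ico 0 1, f (greedyT x) = φ⁻¹ * ((∫ y in Ico 0 1, f y) + ∫ y in Ico 0 φ⁻¹, f y) := by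
  rw [setIntegral_Ico_zero_one_eq_add hf, setIntegral_Ico_zero_inv_comp_greedyT,
    setIntegral_Ico_inv_one_comp_greedyT, mul_add]

theorem setIntegral_Ico_zero_inv_greedyDigit_zero_mul (f : ℝ → ℝ) :
    ∫ x in Ico 0 φ⁻¹, greedyDigit x 0 * f x = 0 := by
  rw [setIntegral_congr_fun measurableSet_Ico fun x hx => by
    rw [greedyDigit_zero_of_lt hx.2, zero_mul]]
  simp

theorem setIntegral_Ico_zero_one_greedyDigit_zero_mul {f : ℝ → ℝ}
    (hf : IntegrableOn f (Ico 0 1)) :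
    ∫ x in Ico 0 1, greedyDigit x 0 * f x = ∫ x in Ico φ⁻¹ 1, f x := by
  have hdf : IntegrableOn (fun x => greedyDigit x 0 * f x) (Ico 0 1) :=
    hf.bdd_mul (measurable_greedyDigit 0).aestronglyMeasurable (ae_of_all _ fun x => by
      rw [Real.norm_of_nonneg (greedyDigit_nonneg x 0)]; exact greedyDigit_le_one x 0)
  rw [setIntegral_Ico_zero_one_eq_add hdf, setIntegral_Ico_zero_inv_greedyDigit_zero_mul,
    zero_add]
  exact setIntegral_congr_fun measurableSet_Ico fun x hx => by
    rw [greedyDigit_zero_of_le hx.1, one_mul]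

noncomputable def digitFreq : ℝ := (φ ^ 2 + 1)⁻¹

/-- The second eigenvalue of `φ⁻¹ [[1, 1], [1, 0]]`, the matrix through which `T` acts on
`(∫_{[0,1)} f, ∫_{[0,φ⁻¹)} f)`. -/
noncomputable def digitDecay : ℝ := -φ⁻¹ ^ 2

theorem digitFreq_mul_one_sub_digitDecay : digitFreq * (1 - digitDecay) = φ⁻¹ ^ 2 := by
  rw [digitFreq, digitDecay]
  field_simp
  ring

theorem digitFreq_pos : 0 < digitFreq := by unfold digitFreq; positivity

theorem digitFreq_le_half : digitFreq ≤ 1 / 2 := by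
  rw [digitFreq, one_div]
  exact inv_anti₀ two_pos (by nlinarith [goldenRatio_ge_three_halves])

theorem abs_digitDecay_le_half : |digitDecay| ≤ 1 / 2 := by
  rw [digitDecay, abs_neg, abs_of_nonneg (by positivity), inv_goldenRatio_eq]
  nlinarith [goldenRatio_sq, goldenRatio_ge_three_halves]

theorem abs_digitDecay_pow_le {m n : ℕ} (h : m ≤ n) : |digitDecay ^ n| ≤ (1 / 2) ^ m := by
  rw [abs_pow]
  exact (pow_le_pow_left₀ (abs_nonneg _) abs_digitDecay_le_half n).trans
    (pow_le_pow_of_le_one (by norm_num) (by norm_num) h)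

theorem setIntegral_greedyDigit (k : ℕ) :
    ∫ x in Ico 0 1, greedyDigit x k = digitFreq * (1 - digitDecay ^ (k + 1)) ∧
    ∫ x in Ico 0 φ⁻¹, greedyDigit x k = φ⁻¹ * (digitFreq * (1 - digitDecay ^ k)) := by
  induction k with
  | zero =>
    have hA := setIntegral_Ico_zero_one_greedyDigit_zero_mul (f := fun _ => 1)
      (integrableOn_const measure_Ico_lt_top.ne)
    have hB := setIntegral_Ico_zero_inv_greedyDigit_zero_mul fun _ => 1
    simp only [mul_one] at hA hB
    refine ⟨?_, by rw [hB]; ring⟩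
    rw [hA, setIntegral_const, Real.volume_real_Ico_of_le inv_goldenRatio_lt_one.le, smul_eq_mul,
      mul_one, zero_add, pow_one, digitFreq_mul_one_sub_digitDecay]
    linear_combination -inv_goldenRatio_add_sq
  | succ k ih =>
    simp only [greedyDigit_succ]
    rw [setIntegral_Ico_zero_one_comp_greedyT (f := (greedyDigit · k))
        (integrable_greedyDigit (k + 1)),
      setIntegral_Ico_zero_inv_comp_greedyT (greedyDigit · k), ih.1, ih.2, digitDecay]
    constructor
    · linear_combination
        digitFreq * (1 + (-φ⁻¹ ^ 2) ^ k * φ⁻¹ ^ 2) * inv_goldenRatio_add_sq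
    · ring

theorem setIntegral_greedyDigit_mul (j m : ℕ) :
    ∫ x in Ico 0 1, greedyDigit x j * greedyDigit x (j + m + 1)
        = digitFreq * (1 - digitDecay ^ m) * ∫ x in Ico 0 1, greedyDigit x j ∧
    ∫ x in Ico 0 φ⁻¹, greedyDigit x j * greedyDigit x (j + m + 1)
        = digitFreq * (1 - digitDecay ^ m) * ∫ x in Ico 0 φ⁻¹, greedyDigit x j := by
  induction j with
  | zero =>
    rw [zero_add, setIntegral_Ico_zero_one_greedyDigit_zero_mul (integrable_greedyDigit _),
      setIntegral_Ico_zero_inv_greedyDigit_zero_mul, (setIntegral_greedyDigit 0).1,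
      (setIntegral_greedyDigit 0).2]
    simp only [greedyDigit_succ]
    rw [setIntegral_Ico_inv_one_comp_greedyT (greedyDigit · m), (setIntegral_greedyDigit m).2,
      zero_add, pow_one, digitFreq_mul_one_sub_digitDecay]
    constructor <;> ring
  | succ j ih =>
    rw [show j + 1 + m + 1 = j + m + 1 + 1 by ring]
    simp only [greedyDigit_succ _ j, greedyDigit_succ _ (j + m + 1)]
    rw [setIntegral_Ico_zero_one_comp_greedyT
        (f := fun y => greedyDigit y j * greedyDigit y (j + m + 1))
        (integrable_greedyDigit_mul (j + 1) (j + m + 1 + 1)),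
      setIntegral_Ico_zero_one_comp_greedyT (f := (greedyDigit · j))
        (integrable_greedyDigit (j + 1)),
      setIntegral_Ico_zero_inv_comp_greedyT (fun y => greedyDigit y j * greedyDigit y (j + m + 1)),
      setIntegral_Ico_zero_inv_comp_greedyT (greedyDigit · j), ih.1, ih.2]
    constructor <;> ring

instance : IsProbabilityMeasure (volume.restrict (Ico (0 : ℝ) 1)) := ⟨by simp⟩

theorem setIntegral_greedyDigit_sub_mul_sub (j k : ℕ) :
    ∫ x in Ico 0 1, (greedyDigit x j - digitFreq) * (greedyDigit x k - digitFreq)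
      = (∫ x in Ico 0 1, greedyDigit x j * greedyDigit x k)
        - digitFreq * (∫ x in Ico 0 1, greedyDigit x j)
        - digitFreq * (∫ x in Ico 0 1, greedyDigit x k) + digitFreq * digitFreq :=
  integral_sub_mul_sub (integrable_greedyDigit j) (integrable_greedyDigit k)
    (integrable_greedyDigit_mul j k) _ _

theorem setIntegral_greedyDigit_sub_mul_self (j : ℕ) :
    ∫ x in Ico 0 1, (greedyDigit x j - digitFreq) * (greedyDigit x j - digitFreq)
      = (1 - 2 * digitFreq) * (digitFreq * (1 - digitDecay ^ (j + 1))) + digitFreq ^ 2 := by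
  simp only [setIntegral_greedyDigit_sub_mul_sub, greedyDigit_mul_self,
    (setIntegral_greedyDigit j).1]
  ring

theorem setIntegral_greedyDigit_sub_mul_sub_add (j m : ℕ) :
    ∫ x in Ico 0 1, (greedyDigit x j - digitFreq) * (greedyDigit x (j + m + 1) - digitFreq)
      = digitFreq ^ 2
        * (digitDecay ^ (j + m + 1) + digitDecay ^ (j + m + 2) - digitDecay ^ m) := by
  rw [setIntegral_greedyDigit_sub_mul_sub, (setIntegral_greedyDigit_mul j m).1,
    (setIntegral_greedyDigit j).1, (setIntegral_greedyDigit (j + m + 1)).1]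
  ring

theorem abs_setIntegral_greedyDigit_sub_mul_sub_le (j k : ℕ) :
    |∫ x in Ico 0 1, (greedyDigit x j - digitFreq) * (greedyDigit x k - digitFreq)|
      ≤ 2 * (1 / 2) ^ Nat.dist j k := by
  wlog hjk : j ≤ k generalizing j k
  · simpa only [mul_comm, Nat.dist_comm] using this k j (le_of_not_ge hjk)
  have hp0 := digitFreq_pos
  have hp1 := digitFreq_le_half
  obtain rfl | ⟨m, rfl⟩ : k = j ∨ ∃ m, k = j + m + 1 :=
    (eq_or_lt_of_le hjk).imp Eq.symm fun h => ⟨k - j - 1, by omega⟩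
  · rw [setIntegral_greedyDigit_sub_mul_self, Nat.dist_self, pow_zero, mul_one]
    have hq := abs_le.1 (abs_digitDecay_pow_le (Nat.zero_le (k + 1)))
    rw [pow_zero] at hq
    rw [abs_le]; constructor <;> nlinarith [hq.1, hq.2]
  · rw [setIntegral_greedyDigit_sub_mul_sub_add, Nat.dist_eq_sub_of_le hjk,
      show j + m + 1 - j = m + 1 by omega, pow_succ, abs_mul, abs_of_pos (by positivity)]
    calc digitFreq ^ 2 * |digitDecay ^ (j + m + 1) + digitDecay ^ (j + m + 2) - digitDecay ^ m|
        ≤ (1 / 2) ^ 2 * (3 * (1 / 2) ^ m) := by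
          gcongr
          refine (abs_sub _ _).trans ?_
          have h1 := abs_digitDecay_pow_le (m := m) (n := j + m + 1) (by omega)
          have h2 := abs_digitDecay_pow_le (m := m) (n := j + m + 2) (by omega)
          have h3 := abs_digitDecay_pow_le (m := m) (n := m) le_rfl
          linarith [abs_add_le (digitDecay ^ (j + m + 1)) (digitDecay ^ (j + m + 2))]
      _ ≤ 2 * ((1 / 2) ^ m * (1 / 2)) := by
          nlinarith [pow_pos (by norm_num : (0 : ℝ) < 1 / 2) m]

theorem ae_tendsto_sum_greedyDigit_div :
    ∀ᵐ x ∂(volume.restrict (Ico (0 : ℝ) 1)),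
      Tendsto (fun N : ℕ => (∑ k ∈ Finset.range N, greedyDigit x k) / N) atTop (𝓝 digitFreq) :=
  ae_tendsto_sum_div_of_abs_integral_sub_mul_sub_le measurable_greedyDigit
    (fun k x => greedyDigit_nonneg x k) (fun k x => greedyDigit_le_one x k) (by norm_num)
    (by norm_num) abs_setIntegral_greedyDigit_sub_mul_sub_le

end GoldenMean

theorem lebesgue_ae_digit_frequency :
    ∀ᵐ x ∂(volume.restrict (Set.Icc (0 : ℝ) (1 / (goldenMean - 1)))),
      Tendsto (fun N : ℕ => (∑ k ∈ Finset.range N, greedyDigit x k) / N)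
        atTop (nhds (1 / (goldenMean ^ 2 + 1))) := by
  have hfreq : 1 / (goldenMean ^ 2 + 1) = digitFreq := one_div _
  have hright : 1 / (goldenMean - 1) = φ := by
    rw [one_div, goldenMean_eq, ← inv_goldenRatio_eq, inv_inv]
  simp only [hfreq, hright, sum_greedyDigit_div_eq_birkhoffAverage]
  rw [← Measure.restrict_congr_set Ico_ae_eq_Icc, ae_restrict_iff' measurableSet_Ico]
  refine quasiMeasurePreserving_greedyT.ae_imp_of_forall_exists_iterate_mem
    (fun x => tendsto_birkhoffAverage_of_tendsto_birkhoffAverage_apply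
      isBounded_range_greedyDigit_zero) ?_ (fun x => exists_iterate_greedyT_mem_Ico)
  simpa only [sum_greedyDigit_div_eq_birkhoffAverage] using
    (ae_restrict_iff' measurableSet_Ico).1 ae_tendsto_sum_greedyDigit_div
end

section
/- Let β = (1+√5)/2 and let P denote the golden-mean normalization operator. If (a_n) ∈ {0,1}^ℕ can be written as a concatenation w₁w₂w₃⋯ of finite words where each w_i for i ≥ 2 begins with 00, then P(a) = P(w₁)P(w₂)P(w₃)⋯, i.e. normalization can be performed blockwise. -/
noncomputable def greedyDigit2 (x : ℝ) (k : ℕ) : Fin 2 :=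
  if 1 / goldenMean ≤ greedyT^[k] x then 1 else 0

noncomputable def projPi (a : ℕ → Fin 2) : ℝ :=
  ∑' n : ℕ, (a n : ℝ) * goldenMean ^ (-((n : ℤ) + 1))

noncomputable def normalizeSeq (a : ℕ → Fin 2) : ℕ → Fin 2 :=
  fun n => greedyDigit2 (projPi a) n

noncomputable def wordVal (w : List (Fin 2)) : ℝ :=
  ∑ i ∈ Finset.range w.length, ((w.getD i 0 : Fin 2) : ℝ) * goldenMean ^ (-((i : ℤ) + 1))

noncomputable def normalizeWord (w : List (Fin 2)) : List (Fin 2) :=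
  (List.range w.length).map (greedyDigit2 (wordVal w))

def partialLen (w : ℕ → List (Fin 2)) (i : ℕ) : ℕ :=
  ∑ j ∈ Finset.range i, (w j).length

def blockIndex (w : ℕ → List (Fin 2)) (n : ℕ) : ℕ :=
  Nat.findGreatest (fun i => partialLen w i ≤ n) n

def concatWords (w : ℕ → List (Fin 2)) : ℕ → Fin 2 :=
  fun n => (w (blockIndex w n)).getD (n - partialLen w (blockIndex w n)) 0

local notation "γ" => goldenMean

lemma goldenMean_eq_goldenRatio : γ = Real.goldenRatio := rfl

lemma goldenMean_pos : 0 < γ := Real.goldenRatio_pos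

lemma inv_goldenMean_pos : 0 < γ⁻¹ := inv_pos.2 goldenMean_pos

lemma inv_goldenMean_lt_one : γ⁻¹ < 1 := inv_lt_one_of_one_lt₀ Real.one_lt_goldenRatio

lemma goldenMean_mul_inv : γ * γ⁻¹ = 1 := mul_inv_cancel₀ goldenMean_pos.ne'

lemma inv_goldenMean_eq_sub_one : γ⁻¹ = γ - 1 := by
  rw [goldenMean_eq_goldenRatio, Real.inv_goldenRatio, ← Real.one_sub_goldenConj]; ring

lemma inv_goldenMean_add_sq : γ⁻¹ + γ⁻¹ ^ 2 = 1 := by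
  have h := goldenMean_mul_inv
  rw [inv_goldenMean_eq_sub_one] at h ⊢
  linear_combination h

lemma zpow_goldenMean_neg_succ (n : ℕ) : γ ^ (-((n : ℤ) + 1)) = γ⁻¹ ^ (n + 1) := by
  rw [← Int.natCast_succ, zpow_neg, zpow_natCast, inv_pow]

lemma greedyT_of_lt_s18 {x : ℝ} (h : x < γ⁻¹) : greedyT x = γ * x := by
  rw [greedyT, one_div, if_pos h]

lemma greedyT_of_le_s18 {x : ℝ} (h : γ⁻¹ ≤ x) : greedyT x = γ * x - 1 := by
  rw [greedyT, one_div, if_neg h.not_gt]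

lemma greedyT_nonneg {x : ℝ} (hx : 0 ≤ x) : 0 ≤ greedyT x := by
  rcases lt_or_ge x γ⁻¹ with h | h
  · rw [greedyT_of_lt_s18 h]; exact mul_nonneg goldenMean_pos.le hx
  · rw [greedyT_of_le_s18 h, sub_nonneg, ← goldenMean_mul_inv]
    exact mul_le_mul_of_nonneg_left h goldenMean_pos.le

lemma greedyDigit2_zero (x : ℝ) : greedyDigit2 x 0 = if γ⁻¹ ≤ x then 1 else 0 := by
  rw [greedyDigit2, one_div, Function.iterate_zero_apply]

lemma greedyDigit2_succ (x : ℝ) (k : ℕ) : greedyDigit2 x (k + 1) = greedyDigit2 (greedyT x) k := by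
  rw [greedyDigit2, greedyDigit2, Function.iterate_succ_apply]

lemma greedyDigit2_add (x : ℝ) (k j : ℕ) :
    greedyDigit2 x (k + j) = greedyDigit2 (greedyT^[k] x) j := by
  rw [greedyDigit2, greedyDigit2, add_comm, Function.iterate_add_apply]

/-- After the digit `0` of `y` comes either a `0` (recurse after one step), or a `1` followed by
a `0` (recurse after two steps, using `γ⁻² + γ⁻³ = γ⁻¹`). -/
lemma le_inv_goldenMean_sub_of_iterate_greedyT_eq_zero {ℓ : ℕ} {y : ℝ} (hy0 : 0 ≤ y)
    (hy : y < γ⁻¹) (hyℓ : greedyT^[ℓ] y = 0) : y ≤ γ⁻¹ - γ⁻¹ ^ (ℓ + 1) := by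
  induction ℓ using Nat.strong_induction_on generalizing y with
  | _ ℓ ih =>
  obtain _ | ℓ := ℓ
  · simp_all
  have hθ := inv_goldenMean_add_sq
  have hθ0 := inv_goldenMean_pos
  have hy_eq : y = γ⁻¹ * (γ * y) := (inv_mul_cancel_left₀ goldenMean_pos.ne' y).symm
  have hz0 : 0 ≤ γ * y := mul_nonneg goldenMean_pos.le hy0
  rw [Function.iterate_succ_apply, greedyT_of_lt_s18 hy] at hyℓ
  rcases lt_or_ge (γ * y) γ⁻¹ with hz | hz
  · have hzle := ih ℓ (Nat.lt_succ_self ℓ) hz0 hz hyℓ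
    calc y = γ⁻¹ * (γ * y) := hy_eq
      _ ≤ γ⁻¹ * (γ⁻¹ - γ⁻¹ ^ (ℓ + 1)) := mul_le_mul_of_nonneg_left hzle hθ0.le
      _ ≤ γ⁻¹ - γ⁻¹ ^ (ℓ + 1 + 1) := by rw [pow_succ' _ (ℓ + 1)]; nlinarith
  obtain _ | ℓ := ℓ
  · simp only [Function.iterate_zero_apply] at hyℓ
    linarith
  rw [Function.iterate_succ_apply, greedyT_of_le_s18 hz] at hyℓ
  have hu0 : 0 ≤ γ * (γ * y) - 1 := by
    rw [sub_nonneg, ← goldenMean_mul_inv]; exact mul_le_mul_of_nonneg_left hz goldenMean_pos.le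
  have hu : γ * (γ * y) - 1 < γ⁻¹ := by
    have : γ * (γ * y) < γ * (γ * γ⁻¹) :=
      mul_lt_mul_of_pos_left (mul_lt_mul_of_pos_left hy goldenMean_pos) goldenMean_pos
    rw [goldenMean_mul_inv, mul_one] at this
    linarith [inv_goldenMean_eq_sub_one]
  have hule := ih ℓ (by omega) hu0 hu hyℓ
  calc y = γ⁻¹ ^ 2 * ((γ * (γ * y) - 1) + 1) := by
        field_simp [goldenMean_pos.ne']; ring
    _ ≤ γ⁻¹ ^ 2 * ((γ⁻¹ - γ⁻¹ ^ (ℓ + 1)) + 1) := by gcongr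
    _ = γ⁻¹ - γ⁻¹ ^ (ℓ + 1 + 1 + 1) := by ring_nf; linear_combination (γ⁻¹) * hθ

lemma greedyT_add_of_iterate_eq_zero {ℓ : ℕ} {y r : ℝ} (hy : 0 ≤ y)
    (hyℓ : greedyT^[ℓ + 1] y = 0) (hr0 : 0 ≤ r) (hr : r < γ⁻¹) :
    (γ⁻¹ ≤ y + γ⁻¹ ^ (ℓ + 1) * r ↔ γ⁻¹ ≤ y) ∧
      greedyT (y + γ⁻¹ ^ (ℓ + 1) * r) = greedyT y + γ⁻¹ ^ ℓ * r := by
  have hscale : γ * (γ⁻¹ ^ (ℓ + 1) * r) = γ⁻¹ ^ ℓ * r := by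
    rw [pow_succ', ← mul_assoc, ← mul_assoc, goldenMean_mul_inv, one_mul]
  have hrest : 0 ≤ γ⁻¹ ^ (ℓ + 1) * r := mul_nonneg (pow_nonneg inv_goldenMean_pos.le _) hr0
  rcases lt_or_ge y γ⁻¹ with hlt | hge
  · -- the margin below γ⁻¹ left by `y` absorbs the perturbation
    have hmargin := le_inv_goldenMean_sub_of_iterate_greedyT_eq_zero hy hlt hyℓ
    have hsmall : γ⁻¹ ^ (ℓ + 1) * r < γ⁻¹ ^ (ℓ + 1 + 1) := by
      rw [pow_succ _ (ℓ + 1)]; exact mul_lt_mul_of_pos_left hr (pow_pos inv_goldenMean_pos _)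
    have hsum : y + γ⁻¹ ^ (ℓ + 1) * r < γ⁻¹ := by linarith
    refine ⟨by simp only [hsum.not_ge, hlt.not_ge], ?_⟩
    rw [greedyT_of_lt_s18 hsum, greedyT_of_lt_s18 hlt, mul_add, hscale]
  · refine ⟨by simp only [hge, iff_true]; linarith, ?_⟩
    rw [greedyT_of_le_s18 (by linarith), greedyT_of_le_s18 hge, mul_add, hscale]; ring

lemma greedy_add_of_iterate_eq_zero {ℓ : ℕ} {y r : ℝ} (hy : 0 ≤ y)
    (hyℓ : greedyT^[ℓ] y = 0) (hr0 : 0 ≤ r) (hr : r < γ⁻¹) :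
    (∀ k < ℓ, greedyDigit2 (y + γ⁻¹ ^ ℓ * r) k = greedyDigit2 y k) ∧
      greedyT^[ℓ] (y + γ⁻¹ ^ ℓ * r) = r := by
  induction ℓ generalizing y with
  | zero => simp_all
  | succ ℓ ih =>
    obtain ⟨hdigit, hstep⟩ := greedyT_add_of_iterate_eq_zero hy hyℓ hr0 hr
    obtain ⟨ihdigit, ihend⟩ := ih (greedyT_nonneg hy) hyℓ
    refine ⟨fun k hk => ?_, by rw [Function.iterate_succ_apply, hstep, ihend]⟩
    obtain _ | k := k
    · simp only [greedyDigit2_zero, hdigit]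
    · rw [greedyDigit2_succ, greedyDigit2_succ, hstep, ihdigit k (by omega)]

lemma fin_two_cast_le_one (c : Fin 2) : (c : ℝ) ≤ 1 := by
  fin_cases c <;> simp

lemma wordVal_nil : wordVal [] = 0 := by simp [wordVal]

lemma wordVal_cons (c : Fin 2) (t : List (Fin 2)) :
    wordVal (c :: t) = γ⁻¹ * (c + wordVal t) := by
  simp only [wordVal, zpow_goldenMean_neg_succ, List.length_cons, Finset.sum_range_succ',
    List.getD_cons_succ, List.getD_cons_zero]
  rw [mul_add, add_comm, Finset.mul_sum]
  congr 1
  · ring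
  · exact Finset.sum_congr rfl fun i _ => by ring

lemma wordVal_nonneg (t : List (Fin 2)) : 0 ≤ wordVal t := by
  induction t with
  | nil => rw [wordVal_nil]
  | cons c t ih => rw [wordVal_cons]; exact mul_nonneg inv_goldenMean_pos.le (by positivity)

lemma wordVal_lt (t : List (Fin 2)) : wordVal t < γ := by
  induction t with
  | nil => rw [wordVal_nil]; exact goldenMean_pos
  | cons c t ih =>
    calc wordVal (c :: t) = γ⁻¹ * (c + wordVal t) := wordVal_cons c t
      _ < γ⁻¹ * (1 + γ) :=
        mul_lt_mul_of_pos_left (by linarith [fin_two_cast_le_one c]) inv_goldenMean_pos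
      _ = γ := by
        rw [mul_add, mul_one, inv_mul_cancel₀ goldenMean_pos.ne', inv_goldenMean_eq_sub_one]; ring

/-- Since `1 = γ⁻¹ + γ⁻²`, subtracting 1 turns a leading `1 1` into `0 0`,
and a leading `1 0` followed by `t` into `0 0` followed by a word of value `wordVal t - 1`. -/
theorem exists_wordVal_eq_sub_one :
    ∀ t : List (Fin 2), 1 ≤ wordVal t → ∃ s, s.length = t.length ∧ wordVal s = wordVal t - 1
  | [], h => by rw [wordVal_nil] at h; norm_num at h
  | 0 :: t, h => by
    have hlt : γ⁻¹ * wordVal t < γ⁻¹ * γ := mul_lt_mul_of_pos_left (wordVal_lt t) inv_goldenMean_pos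
    rw [wordVal_cons, Fin.val_zero, Nat.cast_zero, zero_add] at h
    rw [inv_mul_cancel₀ goldenMean_pos.ne'] at hlt
    exact absurd h hlt.not_ge
  | [1], h => by
    rw [wordVal_cons, wordVal_nil] at h
    norm_num at h
    exact absurd h inv_goldenMean_lt_one.not_ge
  | 1 :: 1 :: t, _ => ⟨0 :: 0 :: t, rfl, by
    simp only [wordVal_cons, Fin.val_zero, Fin.val_one, Nat.cast_zero, Nat.cast_one]
    linear_combination -inv_goldenMean_add_sq⟩
  | 1 :: 0 :: t, h => by
    simp only [wordVal_cons, Fin.val_zero, Fin.val_one, Nat.cast_zero, Nat.cast_one] at h ⊢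
    have ht : 1 ≤ wordVal t := by
      by_contra! ht
      have : γ⁻¹ ^ 2 * wordVal t < γ⁻¹ ^ 2 :=
        mul_lt_of_lt_one_right (pow_pos inv_goldenMean_pos 2) ht
      nlinarith [inv_goldenMean_add_sq]
    obtain ⟨s, hs, hsv⟩ := exists_wordVal_eq_sub_one t ht
    refine ⟨0 :: 0 :: s, by simp [hs], ?_⟩
    simp only [wordVal_cons, Fin.val_zero, Nat.cast_zero, hsv]
    linear_combination -inv_goldenMean_add_sq

lemma goldenMean_mul_wordVal_cons (c : Fin 2) (t : List (Fin 2)) :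
    γ * wordVal (c :: t) = c + wordVal t := by
  rw [wordVal_cons, ← mul_assoc, goldenMean_mul_inv, one_mul]

theorem exists_greedyT_wordVal_cons :
    ∀ (c : Fin 2) (t : List (Fin 2)),
      ∃ s, s.length = t.length ∧ greedyT (wordVal (c :: t)) = wordVal s
  | 0, t => by
    have hγ := goldenMean_mul_wordVal_cons 0 t
    rw [Fin.val_zero, Nat.cast_zero, zero_add] at hγ
    have hval : wordVal (0 :: t) = γ⁻¹ * wordVal t := by simp [wordVal_cons]
    rcases lt_or_ge (wordVal t) 1 with hlt | hge
    · refine ⟨t, rfl, ?_⟩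
      rw [greedyT_of_lt_s18 (by rw [hval]; exact mul_lt_of_lt_one_right inv_goldenMean_pos hlt), hγ]
    · obtain ⟨s, hs, hsv⟩ := exists_wordVal_eq_sub_one t hge
      refine ⟨s, hs, ?_⟩
      rw [greedyT_of_le_s18 (by rw [hval]; exact le_mul_of_one_le_right inv_goldenMean_pos.le hge),
        hγ, hsv]
  | 1, t => by
    refine ⟨t, rfl, ?_⟩
    have hle : γ⁻¹ ≤ wordVal (1 :: t) := by
      rw [wordVal_cons, Fin.val_one, Nat.cast_one]
      exact le_mul_of_one_le_right inv_goldenMean_pos.le (by linarith [wordVal_nonneg t])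
    rw [greedyT_of_le_s18 hle, goldenMean_mul_wordVal_cons, Fin.val_one, Nat.cast_one,
      add_sub_cancel_left]

lemma iterate_greedyT_wordVal_length (t : List (Fin 2)) : greedyT^[t.length] (wordVal t) = 0 := by
  induction h : t.length generalizing t with
  | zero => rw [List.length_eq_zero_iff.1 h, wordVal_nil, Function.iterate_zero_apply]
  | succ m ih =>
    obtain _ | ⟨c, t⟩ := t
    · simp at h
    obtain ⟨s, hs, hT⟩ := exists_greedyT_wordVal_cons c t
    rw [Function.iterate_succ_apply, hT]
    exact ih s (by simpa [hs] using h)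

lemma projPi_eq_tsum (a : ℕ → Fin 2) : projPi a = ∑' n, (a n : ℝ) * γ⁻¹ ^ (n + 1) :=
  tsum_congr fun n => by rw [zpow_goldenMean_neg_succ]

lemma summable_inv_goldenMean_pow_succ : Summable fun n : ℕ => γ⁻¹ ^ (n + 1) :=
  (summable_geometric_of_lt_one inv_goldenMean_pos.le inv_goldenMean_lt_one).comp_injective
    (add_left_injective 1)

lemma tsum_inv_goldenMean_pow_succ : ∑' n : ℕ, γ⁻¹ ^ (n + 1) = γ := by
  simp_rw [pow_succ', tsum_mul_left]
  rw [tsum_geometric_of_lt_one inv_goldenMean_pos.le inv_goldenMean_lt_one,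
    show 1 - γ⁻¹ = γ⁻¹ ^ 2 by linear_combination -inv_goldenMean_add_sq]
  field_simp [goldenMean_pos.ne']

lemma digit_mul_inv_goldenMean_pow_nonneg (c : Fin 2) (n : ℕ) : 0 ≤ (c : ℝ) * γ⁻¹ ^ n :=
  mul_nonneg (Nat.cast_nonneg _) (pow_nonneg inv_goldenMean_pos.le _)

lemma digit_mul_inv_goldenMean_pow_le (c : Fin 2) (n : ℕ) : (c : ℝ) * γ⁻¹ ^ n ≤ γ⁻¹ ^ n :=
  mul_le_of_le_one_left (pow_nonneg inv_goldenMean_pos.le _) (fin_two_cast_le_one c)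

lemma summable_projPi (a : ℕ → Fin 2) : Summable fun n => (a n : ℝ) * γ⁻¹ ^ (n + 1) :=
  summable_inv_goldenMean_pow_succ.of_nonneg_of_le
    (fun _ => digit_mul_inv_goldenMean_pow_nonneg _ _) fun _ => digit_mul_inv_goldenMean_pow_le _ _

lemma projPi_nonneg (a : ℕ → Fin 2) : 0 ≤ projPi a := by
  rw [projPi_eq_tsum]
  exact tsum_nonneg fun _ => digit_mul_inv_goldenMean_pow_nonneg _ _

lemma projPi_lt_of_eq_zero (a : ℕ → Fin 2) {m : ℕ} (hm : a m = 0) : projPi a < γ := by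
  rw [projPi_eq_tsum]
  have hlt : (a m : ℝ) * γ⁻¹ ^ (m + 1) < γ⁻¹ ^ (m + 1) := by
    simpa [hm] using pow_pos inv_goldenMean_pos _
  calc ∑' n, (a n : ℝ) * γ⁻¹ ^ (n + 1) < ∑' n : ℕ, γ⁻¹ ^ (n + 1) :=
        Summable.tsum_lt_tsum_of_nonneg (fun _ => digit_mul_inv_goldenMean_pow_nonneg _ _)
          (fun _ => digit_mul_inv_goldenMean_pow_le _ _) hlt summable_inv_goldenMean_pow_succ
    _ = γ := tsum_inv_goldenMean_pow_succ

lemma projPi_eq_wordVal_add (a : ℕ → Fin 2) (t : List (Fin 2))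
    (ht : ∀ n < t.length, a n = t.getD n 0) :
    projPi a = wordVal t + γ⁻¹ ^ t.length * projPi (fun n => a (t.length + n)) := by
  rw [projPi_eq_tsum, projPi_eq_tsum, ← (summable_projPi a).sum_add_tsum_nat_add t.length, wordVal,
    ← tsum_mul_left]
  congr 1
  · exact Finset.sum_congr rfl fun n hn => by
      rw [ht n (Finset.mem_range.1 hn), zpow_goldenMean_neg_succ]
  · exact tsum_congr fun n => by rw [add_comm n]; ring

lemma projPi_lt_inv_goldenMean (a : ℕ → Fin 2) {m : ℕ} (h0 : a 0 = 0) (h1 : a 1 = 0)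
    (hm2 : 2 ≤ m) (hm : a m = 0) : projPi a < γ⁻¹ := by
  have hsplit : projPi a = γ⁻¹ ^ 2 * projPi (fun n => a (2 + n)) := by
    simpa [wordVal_cons, wordVal_nil] using
      projPi_eq_wordVal_add a [0, 0] fun n hn => by rcases n with _ | _ | n <;> simp_all
  have htail : projPi (fun n => a (2 + n)) < γ :=
    projPi_lt_of_eq_zero _ (m := m - 2) (by rwa [Nat.add_sub_cancel' hm2])
  calc projPi a = γ⁻¹ ^ 2 * projPi (fun n => a (2 + n)) := hsplit
    _ < γ⁻¹ ^ 2 * γ := mul_lt_mul_of_pos_left htail (pow_pos inv_goldenMean_pos 2)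
    _ = γ⁻¹ := by field_simp [goldenMean_pos.ne']

lemma eq_zero_zero_cons_of_take_two {l : List (Fin 2)} (h : l.take 2 = [0, 0]) :
    ∃ t, l = 0 :: 0 :: t := by
  rw [← List.take_append_drop 2 l, h]
  exact ⟨_, rfl⟩

section Blocks

variable {w : ℕ → List (Fin 2)}

lemma partialLen_succ (w : ℕ → List (Fin 2)) (i : ℕ) :
    partialLen w (i + 1) = partialLen w i + (w i).length :=
  Finset.sum_range_succ _ _

lemma partialLen_mono (w : ℕ → List (Fin 2)) : Monotone (partialLen w) := fun _ _ h =>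
  Finset.sum_le_sum_of_subset (Finset.range_subset_range.2 h)

lemma le_partialLen (hne : ∀ i, 1 ≤ (w i).length) (i : ℕ) : i ≤ partialLen w i := by
  induction i with
  | zero => exact Nat.zero_le _
  | succ i ih => rw [partialLen_succ]; exact Nat.add_le_add ih (hne i)

lemma blockIndex_partialLen_add (hne : ∀ i, 1 ≤ (w i).length) {i j : ℕ} (hj : j < (w i).length) :
    blockIndex w (partialLen w i + j) = i := by
  rw [blockIndex, Nat.findGreatest_eq_iff]
  refine ⟨(le_partialLen hne i).trans (Nat.le_add_right _ _), fun _ => Nat.le_add_right _ _,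
    fun k hik _ hk => ?_⟩
  have := partialLen_mono w (Nat.succ_le_of_lt hik)
  rw [partialLen_succ] at this
  omega

lemma concatWords_partialLen_add (hne : ∀ i, 1 ≤ (w i).length) {i j : ℕ} (hj : j < (w i).length) :
    concatWords w (partialLen w i + j) = (w i).getD j 0 := by
  rw [concatWords, blockIndex_partialLen_add hne hj, Nat.add_sub_cancel_left]

lemma exists_partialLen_add_eq (hne : ∀ i, 1 ≤ (w i).length) (n : ℕ) :
    ∃ i, ∃ j < (w i).length, partialLen w i + j = n := by
  set i := Nat.findGreatest (fun i => partialLen w i ≤ n) n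
  have hle : partialLen w i ≤ n :=
    Nat.findGreatest_spec (P := fun i => partialLen w i ≤ n) (Nat.zero_le n) (by simp [partialLen])
  have hlt : n < partialLen w (i + 1) := by
    by_contra! h
    have := Nat.le_findGreatest (P := fun i => partialLen w i ≤ n) ((le_partialLen hne _).trans h) h
    omega
  rw [partialLen_succ] at hlt
  exact ⟨i, n - partialLen w i, by omega, by omega⟩

/-- The sequence `wᵢ wᵢ₊₁ ⋯`. -/
def concatTail (w : ℕ → List (Fin 2)) (i : ℕ) : ℕ → Fin 2 :=
  fun n => concatWords w (partialLen w i + n)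

lemma concatTail_apply (hne : ∀ i, 1 ≤ (w i).length) {i j : ℕ} (hj : j < (w i).length) :
    concatTail w i j = (w i).getD j 0 :=
  concatWords_partialLen_add hne hj

lemma concatTail_length_add (w : ℕ → List (Fin 2)) (i n : ℕ) :
    concatTail w i ((w i).length + n) = concatTail w (i + 1) n := by
  rw [concatTail, concatTail, partialLen_succ, add_assoc]

lemma projPi_concatTail (hne : ∀ i, 1 ≤ (w i).length) (i : ℕ) :
    projPi (concatTail w i) =
      wordVal (w i) + γ⁻¹ ^ (w i).length * projPi (concatTail w (i + 1)) := by
  rw [projPi_eq_wordVal_add _ (w i) fun j hj => concatTail_apply hne hj]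
  simp only [concatTail_length_add]

lemma projPi_concatTail_succ_lt (hne : ∀ i, 1 ≤ (w i).length)
    (h00 : ∀ i, 1 ≤ i → (w i).take 2 = [0, 0]) (i : ℕ) :
    projPi (concatTail w (i + 1)) < γ⁻¹ := by
  obtain ⟨t, ht⟩ := eq_zero_zero_cons_of_take_two (h00 (i + 1) (Nat.le_add_left 1 i))
  obtain ⟨t', ht'⟩ := eq_zero_zero_cons_of_take_two (h00 (i + 2) (Nat.le_add_left 1 (i + 1)))
  refine projPi_lt_inv_goldenMean _ (m := (w (i + 1)).length) ?_ ?_ (by simp [ht]) ?_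
  · rw [concatTail_apply hne (by simp [ht]), ht]; rfl
  · rw [concatTail_apply hne (by simp [ht]), ht]; rfl
  · rw [← add_zero (w (i + 1)).length, concatTail_length_add,
      concatTail_apply hne (by simp [ht']), ht']
    rfl

lemma greedy_concatTail (hne : ∀ i, 1 ≤ (w i).length)
    (h00 : ∀ i, 1 ≤ i → (w i).take 2 = [0, 0]) (i : ℕ) :
    (∀ k < (w i).length,
        greedyDigit2 (projPi (concatTail w i)) k = greedyDigit2 (wordVal (w i)) k) ∧
      greedyT^[(w i).length] (projPi (concatTail w i)) = projPi (concatTail w (i + 1)) := by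
  rw [projPi_concatTail hne]
  exact greedy_add_of_iterate_eq_zero (wordVal_nonneg _) (iterate_greedyT_wordVal_length _)
    (projPi_nonneg _) (projPi_concatTail_succ_lt hne h00 i)

lemma iterate_greedyT_projPi_concatWords (hne : ∀ i, 1 ≤ (w i).length)
    (h00 : ∀ i, 1 ≤ i → (w i).take 2 = [0, 0]) (i : ℕ) :
    greedyT^[partialLen w i] (projPi (concatWords w)) = projPi (concatTail w i) := by
  induction i with
  | zero => exact congrArg projPi (funext fun n => by simp [concatTail, partialLen])
  | succ i ih =>
    rw [partialLen_succ, add_comm, Function.iterate_add_apply, ih, (greedy_concatTail hne h00 i).2]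

end Blocks

lemma length_normalizeWord (t : List (Fin 2)) : (normalizeWord t).length = t.length := by
  simp [normalizeWord]

lemma getD_normalizeWord {t : List (Fin 2)} {j : ℕ} (hj : j < t.length) :
    (normalizeWord t).getD j 0 = greedyDigit2 (wordVal t) j := by
  simp [normalizeWord, hj]

lemma partialLen_normalizeWord (w : ℕ → List (Fin 2)) :
    partialLen (fun i => normalizeWord (w i)) = partialLen w := by
  funext i
  simp only [partialLen, length_normalizeWord]

/-- Sidorov–Vershik blocking property: if each word `wᵢ`, `i ≥ 2`, begins with `00`,
then normalization of the concatenation can be performed blockwise. -/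
theorem normalize_concat_blockwise (w : ℕ → List (Fin 2)) (a : ℕ → Fin 2)
    (hne : ∀ i, 1 ≤ (w i).length)
    (h00 : ∀ i, 1 ≤ i → (w i).take 2 = [0, 0])
    (ha : a = concatWords w) :
    normalizeSeq a = concatWords (fun i => normalizeWord (w i)) := by
  subst ha
  funext n
  obtain ⟨i, j, hj, rfl⟩ := exists_partialLen_add_eq hne n
  have hne' : ∀ i, 1 ≤ (normalizeWord (w i)).length := by simpa [length_normalizeWord] using hne
  calc normalizeSeq (concatWords w) (partialLen w i + j)
      = greedyDigit2 (projPi (concatTail w i)) j := by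
        rw [normalizeSeq, greedyDigit2_add, iterate_greedyT_projPi_concatWords hne h00]
    _ = greedyDigit2 (wordVal (w i)) j := (greedy_concatTail hne h00 i).1 j hj
    _ = (normalizeWord (w i)).getD j 0 := (getD_normalizeWord hj).symm
    _ = concatWords (fun i => normalizeWord (w i)) (partialLen w i + j) := by
        rw [← partialLen_normalizeWord w,
          concatWords_partialLen_add hne' (by rwa [length_normalizeWord])]
end
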